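/- arXiv:2507.15463 — 6 statements merged into one kernel-verified Lean document; each statement's English description precedes it below -/
import Mathlib

section
/- The Johnson graph J(4,2) is paired 2-coverable: for any four distinct vertices u, v, x, y of J(4,2), there exist two vertex-disjoint paths from u to v and from x to y covering all six vertices. -/
/-- The Johnson graph `J(n,k)`: vertices are the `k`-subsets of `[n]`,
two distinct vertices adjacent iff their subsets share exactly `k-1` elements. -/
def JohnsonGraph (n k : ℕ) : SimpleGraph {s : Finset (Fin n) // s.card = k} where
  Adj u v := u ≠ v ∧ (u.1 ∩ v.1).card = k - 1
  symm := by
    constructor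
    rintro u v ⟨h1, h2⟩
    exact ⟨h1.symm, by rwa [Finset.inter_comm]⟩
  loopless := ⟨fun u h => h.1 rfl⟩

/-- A graph is paired 2-coverable if for any four distinct vertices `u, v, x, y`
there exist two vertex-disjoint paths, one from `u` to `v` and one from `x` to `y`,
that together cover every vertex of the graph. -/
def Paired2Coverable {V : Type*} (G : SimpleGraph V) : Prop :=
  ∀ u v x y : V, u ≠ v → u ≠ x → u ≠ y → v ≠ x → v ≠ y → x ≠ y →
    ∃ (P : G.Walk u v) (Q : G.Walk x y), P.IsPath ∧ Q.IsPath ∧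
      (∀ z, z ∈ P.support → z ∉ Q.support) ∧
      (∀ z, z ∈ P.support ∨ z ∈ Q.support)

abbrev JV := {s : Finset (Fin 4) // s.card = 2}

instance : DecidableRel (JohnsonGraph 4 2).Adj :=
  fun u v => decidable_of_iff (u ≠ v ∧ (u.1 ∩ v.1).card = 1) Iff.rfl

set_option maxHeartbeats 2000000 in
set_option synthInstance.maxSize 400 in
set_option synthInstance.maxHeartbeats 400000 in
lemma jkey : ∀ u v x y : JV, u ≠ v → u ≠ x → u ≠ y → v ≠ x → v ≠ y → x ≠ y →
    ∃ a b : JV, a ≠ b ∧ a ≠ u ∧ a ≠ v ∧ a ≠ x ∧ a ≠ y ∧ b ≠ u ∧ b ≠ v ∧ b ≠ x ∧ b ≠ y ∧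
      (((JohnsonGraph 4 2).Adj u a ∧ (JohnsonGraph 4 2).Adj a v ∧
        (JohnsonGraph 4 2).Adj x b ∧ (JohnsonGraph 4 2).Adj b y) ∨
       ((JohnsonGraph 4 2).Adj u v ∧ (JohnsonGraph 4 2).Adj x a ∧
        (JohnsonGraph 4 2).Adj a b ∧ (JohnsonGraph 4 2).Adj b y) ∨
       ((JohnsonGraph 4 2).Adj u a ∧ (JohnsonGraph 4 2).Adj a b ∧
        (JohnsonGraph 4 2).Adj b v ∧ (JohnsonGraph 4 2).Adj x y)) := by decide

set_option maxHeartbeats 2000000 in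
set_option synthInstance.maxSize 400 in
set_option synthInstance.maxHeartbeats 400000 in
lemma jcover : ∀ u v x y a b : JV, u ≠ v → u ≠ x → u ≠ y → v ≠ x → v ≠ y → x ≠ y →
    a ≠ u → a ≠ v → a ≠ x → a ≠ y → b ≠ u → b ≠ v → b ≠ x → b ≠ y → a ≠ b →
    ∀ z : JV, z = u ∨ z = v ∨ z = x ∨ z = y ∨ z = a ∨ z = b := by decide

theorem johnson_4_2_paired2Coverable : Paired2Coverable (JohnsonGraph 4 2) := by
  intro u v x y huv hux huy hvx hvy hxy
  obtain ⟨a, b, hab, hau, hav, hax, hay, hbu, hbv, hbx, hby, hcase⟩ :=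
    jkey u v x y huv hux huy hvx hvy hxy
  have hcov := jcover u v x y a b huv hux huy hvx hvy hxy hau hav hax hay hbu hbv hbx hby hab
  rcases hcase with ⟨h1, h2, h3, h4⟩ | ⟨h1, h2, h3, h4⟩ | ⟨h1, h2, h3, h4⟩
  · refine ⟨.cons h1 (.cons h2 .nil), .cons h3 (.cons h4 .nil), ?_, ?_, ?_, ?_⟩
    · simp [SimpleGraph.Walk.isPath_def, huv, hau.symm, hav]
    · simp [SimpleGraph.Walk.isPath_def, hxy, hbx.symm, hby]
    · intro z hz hz'
      simp [SimpleGraph.Walk.support_cons] at hz hz'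
      rcases hz with rfl | rfl | rfl <;> rcases hz' with rfl | rfl | rfl <;> simp_all
    · intro z
      have := hcov z
      simp [SimpleGraph.Walk.support_cons]
      tauto
  · refine ⟨.cons h1 .nil, .cons h2 (.cons h3 (.cons h4 .nil)), ?_, ?_, ?_, ?_⟩
    · simp [SimpleGraph.Walk.isPath_def, huv]
    · simp [SimpleGraph.Walk.isPath_def, hxy, hax.symm, hbx.symm, hab, hay, hby]
    · intro z hz hz'
      simp [SimpleGraph.Walk.support_cons] at hz hz'
      rcases hz with rfl | rfl <;> rcases hz' with rfl | rfl | rfl | rfl <;> simp_all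
    · intro z
      have := hcov z
      simp [SimpleGraph.Walk.support_cons]
      tauto
  · refine ⟨.cons h1 (.cons h2 (.cons h3 .nil)), .cons h4 .nil, ?_, ?_, ?_, ?_⟩
    · simp [SimpleGraph.Walk.isPath_def, huv, hau.symm, hav, hbu.symm, hbv, hab]
    · simp [SimpleGraph.Walk.isPath_def, hxy]
    · intro z hz hz'
      simp [SimpleGraph.Walk.support_cons] at hz hz'
      rcases hz with rfl | rfl | rfl | rfl <;> rcases hz' with rfl | rfl <;> simp_all
    · intro z
      have := hcov z
      simp [SimpleGraph.Walk.support_cons]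
      tauto
end

section
/- If a graph G is paired 2-coverable and has at least 5 vertices, then G is Hamilton-connected. -/
/-- A graph is Hamilton-connected if every pair of distinct vertices is joined
by a Hamilton path. -/
def HamiltonConnected {V : Type*} [DecidableEq V] (G : SimpleGraph V) : Prop :=
  ∀ u v : V, u ≠ v → ∃ p : G.Walk u v, p.IsHamiltonian

/-!
Given `u ≠ x`, a first application of paired 2-coverability to `u, x` and two further vertices
yields an edge `ac` avoiding `u` and `x`. A second application to the pairs `{u, a}` and
`{x, c}` splits the vertex set into a `u`–`a` path and an `x`–`c` path, and the edge `ac`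
joins them into a Hamilton path from `u` to `x`.
-/

namespace SimpleGraph

variable {V : Type*} {G : SimpleGraph V}

lemma Walk.isHamiltonian_append_cons_reverse [DecidableEq V] {u a x c : V}
    {P : G.Walk u a} {Q : G.Walk x c} (hP : P.IsPath) (hQ : Q.IsPath)
    (hdisj : ∀ z, z ∈ P.support → z ∉ Q.support) (hcov : ∀ z, z ∈ P.support ∨ z ∈ Q.support)
    (hac : G.Adj a c) : (P.append (cons hac Q.reverse)).IsHamiltonian := by
  have hsupp : (P.append (cons hac Q.reverse)).support = P.support ++ Q.support.reverse := by
    rw [support_append, support_cons, support_reverse]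
    rfl
  refine IsPath.isHamiltonian_of_mem ?_ fun z => ?_
  · rw [isPath_def, hsupp, List.nodup_append]
    exact ⟨hP.support_nodup, List.nodup_reverse.mpr hQ.support_nodup,
      fun z hzP w hwQ hzw => hdisj z hzP (hzw ▸ List.mem_reverse.mp hwQ)⟩
  · rw [hsupp, List.mem_append, List.mem_reverse]
    exact hcov z

end SimpleGraph

lemma Fintype.exists_ne_pair_avoiding_of_four_le_card {V : Type*} [Fintype V]
    (hcard : 4 ≤ Fintype.card V) (u x : V) :
    ∃ a b : V, a ≠ b ∧ a ≠ u ∧ a ≠ x ∧ b ≠ u ∧ b ≠ x := by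
  classical
  have hcompl : 1 < ({u, x}ᶜ : Finset V).card := by
    have hpair : ({u, x} : Finset V).card ≤ 2 := Finset.card_le_two
    rw [Finset.card_compl]
    omega
  obtain ⟨a, ha, b, hb, hab⟩ := Finset.one_lt_card.mp hcompl
  simp only [Finset.mem_compl, Finset.mem_insert, Finset.mem_singleton, not_or] at ha hb
  exact ⟨a, b, hab, ha.1, ha.2, hb.1, hb.2⟩

lemma Paired2Coverable.exists_adj_avoiding {V : Type*} [Fintype V]
    {G : SimpleGraph V} (hG : Paired2Coverable G) (hcard : 4 ≤ Fintype.card V) {u x : V}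
    (hux : u ≠ x) : ∃ a c : V, G.Adj a c ∧ a ≠ u ∧ a ≠ x ∧ c ≠ u ∧ c ≠ x := by
  obtain ⟨a, b, hab, hau, hax, hbu, hbx⟩ :=
    Fintype.exists_ne_pair_avoiding_of_four_le_card hcard u x
  obtain ⟨P, Q, -, -, hdisj, -⟩ :=
    hG u x a b hux hau.symm hbu.symm hax.symm hbx.symm hab
  have hQ : ¬Q.Nil := SimpleGraph.Walk.not_nil_of_ne hab
  have hsnd : Q.snd ∈ Q.support := List.mem_of_mem_tail (Q.snd_mem_tail_support hQ)
  exact ⟨a, Q.snd, Q.adj_snd hQ, hau, hax,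
    fun h => hdisj u P.start_mem_support (h ▸ hsnd),
    fun h => hdisj x P.end_mem_support (h ▸ hsnd)⟩

theorem paired2Coverable_hamiltonConnected {V : Type*} [DecidableEq V] [Fintype V]
    (G : SimpleGraph V) (hG : Paired2Coverable G) (hcard : 5 ≤ Fintype.card V) :
    HamiltonConnected G := by
  intro u x hux
  obtain ⟨a, c, hac, hau, hax, hcu, hcx⟩ := hG.exists_adj_avoiding (by omega) hux
  obtain ⟨P, Q, hP, hQ, hdisj, hcov⟩ :=
    hG u a x c hau.symm hux hcu.symm hax hac.ne hcx.symm
  exact ⟨_, SimpleGraph.Walk.isHamiltonian_append_cons_reverse hP hQ hdisj hcov hac⟩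
end

section
/- Let n ≥ 4 and 1 ≤ p < q < n-1 ≤ n (with q ≤ n-2 strictly, i.e., p ≤ n-3). For any two distinct p-subsets u, v of [n] and any two distinct q-subsets s, t of [n], there exist q-subsets u', v' with u ⊆ u', v ⊆ v', u' ≠ v', and {u',v'} ∩ {s,t} = ∅. -/
/-!
The `q`-subsets containing a `p`-subset `u` number `C(n - p, q - p) ≥ 3`, so after discarding
`s` and `t` each of `u`, `v` keeps an extension. The only way two distinct extensions cannot be
chosen is that both families of extensions are `{s, t, w}` for one and the same `w`; but the
families determine `u` and `v`, since for `a ∉ u` some `q`-superset of `u` misses `a`.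
-/

open Finset

lemma Nat.three_le_choose {m k : ℕ} (hk : 1 ≤ k) (hkm : k + 2 ≤ m) : 3 ≤ m.choose k :=
  calc 3 = (1 + 2).choose 2 := rfl
    _ ≤ (k + 2).choose 2 := Nat.choose_le_choose 2 (by omega)
    _ = (k + 2).choose k := (Nat.choose_symm_add).symm
    _ ≤ m.choose k := Nat.choose_le_choose k hkm

namespace Finset

lemma eq_insert_or_exists_mem_notMem_ne {β : Type*} [DecidableEq β] {A S : Finset β} {b : β}
    (hA : #S < #A) (hb : b ∉ S) : A = insert b S ∨ ∃ a ∈ A, a ∉ S ∧ a ≠ b := by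
  by_cases hsub : A ⊆ insert b S
  · exact .inl (eq_of_subset_of_card_le hsub (by rw [card_insert_of_notMem hb]; omega))
  · obtain ⟨a, haA, ha⟩ := not_subset.mp hsub
    rw [mem_insert, not_or] at ha
    exact .inr ⟨a, haA, ha.2, ha.1⟩

lemma exists_ne_notMem_of_card_lt {β : Type*} [DecidableEq β] {A B S : Finset β}
    (hA : #S < #A) (hB : #S < #B) (hAB : A ≠ B) :
    ∃ a ∈ A, ∃ b ∈ B, a ≠ b ∧ a ∉ S ∧ b ∉ S := by
  obtain ⟨a, haA, haS⟩ := exists_mem_notMem_of_card_lt_card hA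
  obtain ⟨b, hbB, hbS⟩ := exists_mem_notMem_of_card_lt_card hB
  rcases eq_insert_or_exists_mem_notMem_ne hA hbS with hAeq | ⟨a', ha'A, ha'S, ha'b⟩
  · rcases eq_insert_or_exists_mem_notMem_ne hB haS with hBeq | ⟨b', hb'B, hb'S, hb'a⟩
    · have hab : a = b := by
        rw [hAeq, mem_insert] at haA
        exact haA.resolve_right haS
      exact absurd (hAeq.trans (hab ▸ hBeq).symm) hAB
    · exact ⟨a, haA, b', hb'B, hb'a.symm, haS, hb'S⟩
  · exact ⟨a', ha'A, b, hbB, ha'b, ha'S, hbS⟩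

variable {α : Type*} [Fintype α] [DecidableEq α]

def extensions (q : ℕ) (u : Finset α) : Finset (Finset α) :=
  (univ.powersetCard q).filter (u ⊆ ·)

lemma mem_extensions {q : ℕ} {u w : Finset α} : w ∈ extensions q u ↔ u ⊆ w ∧ #w = q := by
  simp [extensions, and_comm]

lemma card_extensions {q : ℕ} {u : Finset α} (hu : #u ≤ q) :
    #(extensions q u) = (Fintype.card α - #u).choose (q - #u) :=
  card_filter_powersetCard_subset u univ q (subset_univ u) hu

lemma exists_mem_extensions_notMem {q : ℕ} {u : Finset α} {a : α} (hu : #u ≤ q)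
    (hq : q < Fintype.card α) (ha : a ∉ u) : ∃ w ∈ extensions q u, a ∉ w := by
  obtain ⟨w, huw, hwa, hw⟩ := exists_subsuperset_card_eq (subset_erase.mpr ⟨subset_univ u, ha⟩)
    hu (by rw [card_erase_of_mem (mem_univ a), card_univ]; omega)
  exact ⟨w, mem_extensions.mpr ⟨huw, hw⟩, fun haw => by simpa using hwa haw⟩

lemma subset_of_extensions_subset {q : ℕ} {u v : Finset α} (hu : #u ≤ q)
    (hq : q < Fintype.card α) (h : extensions q u ⊆ extensions q v) : v ⊆ u := by
  intro a hav
  by_contra hau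
  obtain ⟨w, hw, haw⟩ := exists_mem_extensions_notMem hu hq hau
  exact haw ((mem_extensions.mp (h hw)).1 hav)

end Finset

theorem distinct_extensions_avoiding_two_general (n p q : ℕ)
    (hpq : p < q) (hq : q ≤ n - 2)
    (u v s t : Finset (Fin n)) (hu : u.card = p) (hv : v.card = p) (huv : u ≠ v) :
    ∃ u' v' : Finset (Fin n), u'.card = q ∧ v'.card = q ∧ u ⊆ u' ∧ v ⊆ v' ∧
      u' ≠ v' ∧ u' ≠ s ∧ u' ≠ t ∧ v' ≠ s ∧ v' ≠ t := by
  have hcard : ∀ x : Finset (Fin n), #x = p → #({s, t} : Finset _) < #(extensions q x) := by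
    intro x hx
    rw [card_extensions (by omega), Fintype.card_fin, hx]
    exact (card_le_two).trans_lt (Nat.three_le_choose (by omega) (by omega))
  have hne : extensions q u ≠ extensions q v := fun h =>
    huv (eq_of_subset_of_card_le (subset_of_extensions_subset (by omega)
      (by rw [Fintype.card_fin]; omega) h.ge) (by omega))
  obtain ⟨u', hu', v', hv', hu'v', hu'st, hv'st⟩ :=
    exists_ne_notMem_of_card_lt (hcard u hu) (hcard v hv) hne
  rw [mem_extensions] at hu' hv'
  simp only [mem_insert, mem_singleton, not_or] at hu'st hv'st
  exact ⟨u', v', hu'.2, hv'.2, hu'.1, hv'.1, hu'v', hu'st.1, hu'st.2, hv'st.1, hv'st.2⟩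

theorem distinct_extensions_avoiding_two (n p q : ℕ) (hn : 4 ≤ n)
    (hp : 1 ≤ p) (hpq : p < q) (hq : q ≤ n - 2)
    (u v s t : Finset (Fin n)) (hu : u.card = p) (hv : v.card = p) (huv : u ≠ v)
    (hs : s.card = q) (ht : t.card = q) (hst : s ≠ t) :
    ∃ u' v' : Finset (Fin n), u'.card = q ∧ v'.card = q ∧ u ⊆ u' ∧ v ⊆ v' ∧
      u' ≠ v' ∧ u' ≠ s ∧ u' ≠ t ∧ v' ≠ s ∧ v' ≠ t :=
  distinct_extensions_avoiding_two_general n p q hpq hq u v s t hu hv huv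
end

section
/- Let G be a graph partitioned into induced subgraphs X and Y such that Y is Hamilton-connected with at least 2 vertices. Suppose u,v,x,y are four distinct vertices of X such that X admits vertex-disjoint u–v and x–y paths covering V(X), and suppose some edge ab on the u–v path has the property that a has a neighbor a' in Y and b has a neighbor b' in Y with a' ≠ b'. Then G admits vertex-disjoint u–v and x–y paths covering V(G). -/
open SimpleGraph Walk

private lemma edge_split {V : Type*} {G : SimpleGraph V} {u v a b : V} (p : G.Walk u v)
    (h : s(a,b) ∈ p.edges) :
    (∃ (q : G.Walk u a) (hadj : G.Adj a b) (r : G.Walk b v), p = q.append (Walk.cons hadj r)) ∨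
    (∃ (q : G.Walk u b) (hadj : G.Adj b a) (r : G.Walk a v), p = q.append (Walk.cons hadj r)) := by
  induction p with
  | nil => simp at h
  | cons h' p' ih =>
    rw [Walk.edges_cons, List.mem_cons] at h
    rcases h with h | h
    · rw [Sym2.eq_iff] at h
      rcases h with ⟨rfl, rfl⟩ | ⟨rfl, rfl⟩
      · exact Or.inl ⟨Walk.nil, h', p', by simp⟩
      · exact Or.inr ⟨Walk.nil, h', p', by simp⟩
    · rcases ih h with ⟨q, hadj, r, rfl⟩ | ⟨q, hadj, r, rfl⟩
      · exact Or.inl ⟨Walk.cons h' q, hadj, r, by simp⟩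
      · exact Or.inr ⟨Walk.cons h' q, hadj, r, by simp⟩

private lemma helper {V : Type*} [DecidableEq V] (G : SimpleGraph V) (X Y : Set V)
    (hdisj : Disjoint X Y) (hunion : X ∪ Y = Set.univ)
    (hHC : HamiltonConnected (G.induce Y))
    {u v x y a b : X} {a' b' : Y}
    (ha' : G.Adj a a') (hb' : G.Adj b b') (ha'b' : a' ≠ b')
    (q : (G.induce X).Walk u a) (hadj : (G.induce X).Adj a b) (r : (G.induce X).Walk b v)
    (Q : (G.induce X).Walk x y)
    (hP : (q.append (Walk.cons hadj r)).IsPath) (hQ : Q.IsPath)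
    (hdis : ∀ z, z ∈ (q.append (Walk.cons hadj r)).support → z ∉ Q.support)
    (hcov : ∀ z : X, z ∈ (q.append (Walk.cons hadj r)).support ∨ z ∈ Q.support) :
    ∃ (P' : G.Walk (u : V) (v : V)) (Q' : G.Walk (x : V) (y : V)),
      P'.IsPath ∧ Q'.IsPath ∧
      (∀ z, z ∈ P'.support → z ∉ Q'.support) ∧
      (∀ z : V, z ∈ P'.support ∨ z ∈ Q'.support) := by
  obtain ⟨H, hH⟩ := hHC a' b' ha'b'
  have hinj : Function.Injective (Subtype.val : X → V) := Subtype.val_injective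
  have hinjY : Function.Injective (Subtype.val : Y → V) := Subtype.val_injective
  let fX : G.induce X ↪g G := SimpleGraph.Embedding.induce X
  let fY : G.induce Y ↪g G := SimpleGraph.Embedding.induce Y
  let q' : G.Walk (u : V) (a : V) := q.map fX.toHom
  let r' : G.Walk (b : V) (v : V) := r.map fX.toHom
  let H' : G.Walk (a' : V) (b' : V) := H.map fY.toHom
  have hcoX : ⇑fX.toHom = (Subtype.val : X → V) := rfl
  have hcoY : ⇑fY.toHom = (Subtype.val : Y → V) := rfl
  have hsq : q'.support = q.support.map Subtype.val := by
    exact SimpleGraph.Walk.support_map ..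
  have hsr : r'.support = r.support.map Subtype.val := by
    exact SimpleGraph.Walk.support_map ..
  have hsH : H'.support = H.support.map Subtype.val := by
    exact SimpleGraph.Walk.support_map ..
  set P' : G.Walk (u : V) (v : V) :=
    q'.append (Walk.cons ha' (H'.append (Walk.cons hb'.symm r'))) with hP'def
  set Q' : G.Walk (x : V) (y : V) := Q.map fX.toHom with hQ'def
  have hsQ : Q'.support = Q.support.map Subtype.val := by
    exact SimpleGraph.Walk.support_map ..
  have hsP' : P'.support = q'.support ++ (H'.support ++ r'.support) := by
    rw [hP'def, Walk.support_append, Walk.support_cons, List.tail_cons, Walk.support_append,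
      Walk.support_cons, List.tail_cons]
  have hsP : (q.append (Walk.cons hadj r)).support = q.support ++ r.support := by
    rw [Walk.support_append, Walk.support_cons, List.tail_cons]
  -- memberships
  have memq : ∀ z : V, z ∈ q'.support → z ∈ X := by
    intro z hz; rw [hsq, List.mem_map] at hz; obtain ⟨w, _, rfl⟩ := hz; exact w.2
  have memr : ∀ z : V, z ∈ r'.support → z ∈ X := by
    intro z hz; rw [hsr, List.mem_map] at hz; obtain ⟨w, _, rfl⟩ := hz; exact w.2
  have memH : ∀ z : V, z ∈ H'.support → z ∈ Y := by
    intro z hz; rw [hsH, List.mem_map] at hz; obtain ⟨w, _, rfl⟩ := hz; exact w.2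
  have memQ : ∀ z : V, z ∈ Q'.support → z ∈ X := by
    intro z hz; rw [hsQ, List.mem_map] at hz; obtain ⟨w, _, rfl⟩ := hz; exact w.2
  have hPnd : (q.support ++ r.support).Nodup := by
    have := hP.support_nodup; rwa [hsP] at this
  rw [List.nodup_append] at hPnd
  obtain ⟨hqnd, hrnd, hqr⟩ := hPnd
  have hHnd : H.support.Nodup := hH.isPath.support_nodup
  refine ⟨P', Q', ?_, ?_, ?_, ?_⟩
  · rw [Walk.isPath_def, hsP']
    rw [List.nodup_append, List.nodup_append]
    refine ⟨hsq ▸ hqnd.map hinj, ⟨hsH ▸ hHnd.map hinjY, hsr ▸ hrnd.map hinj, ?_⟩, ?_⟩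
    · -- H' disjoint r'
      intro z hz z' hz' hzz; subst hzz
      exact Set.disjoint_right.mp hdisj (memH z hz) (memr z hz')
    · intro z hz z' hz' hzz; subst hzz
      rcases List.mem_append.mp hz' with hz' | hz'
      · -- z in q' and H' : X vs Y
        exact Set.disjoint_left.mp hdisj (memq z hz) (memH z hz')
      · -- z in q' and r'
        rw [hsq, List.mem_map] at hz
        rw [hsr, List.mem_map] at hz'
        obtain ⟨w, hw, rfl⟩ := hz
        obtain ⟨w', hw', hww⟩ := hz'
        exact hqr _ hw _ (hinj hww ▸ hw') rfl
  · exact Walk.map_isPath_of_injective fX.injective hQ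
  · intro z hz hz'
    have hzX : z ∈ X := memQ z hz'
    rw [hsQ, List.mem_map] at hz'
    obtain ⟨w, hw, rfl⟩ := hz'
    rw [hsP'] at hz
    rcases List.mem_append.mp hz with hz | hz
    · rw [hsq, List.mem_map] at hz
      obtain ⟨w', hw', hww⟩ := hz
      refine hdis w' ?_ ((hinj hww) ▸ hw)
      rw [hsP]; exact List.mem_append.mpr (Or.inl hw')
    · rcases List.mem_append.mp hz with hz | hz
      · exact Set.disjoint_left.mp hdisj hzX (memH _ hz)
      · rw [hsr, List.mem_map] at hz
        obtain ⟨w', hw', hww⟩ := hz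
        refine hdis w' ?_ ((hinj hww) ▸ hw)
        rw [hsP]; exact List.mem_append.mpr (Or.inr hw')
  · intro z
    have hz : z ∈ X ∪ Y := hunion ▸ Set.mem_univ z
    rcases hz with hz | hz
    · rcases hcov ⟨z, hz⟩ with h | h
      · left
        rw [hsP] at h
        rw [hsP']
        rcases List.mem_append.mp h with h | h
        · exact List.mem_append.mpr (Or.inl (hsq ▸ List.mem_map.mpr ⟨⟨z, hz⟩, h, rfl⟩))
        · exact List.mem_append.mpr (Or.inr (List.mem_append.mpr (Or.inr
            (hsr ▸ List.mem_map.mpr ⟨⟨z, hz⟩, h, rfl⟩))))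
      · right
        exact hsQ ▸ List.mem_map.mpr ⟨⟨z, hz⟩, h, rfl⟩
    · left
      rw [hsP']
      exact List.mem_append.mpr (Or.inr (List.mem_append.mpr (Or.inl
        (hsH ▸ List.mem_map.mpr ⟨⟨z, hz⟩, hH.mem_support ⟨z, hz⟩, rfl⟩))))

theorem path_extension {V : Type*} [DecidableEq V] (G : SimpleGraph V) (X Y : Set V)
    (hdisj : Disjoint X Y) (hunion : X ∪ Y = Set.univ)
    (hY2 : Y.Nontrivial)
    (hHC : HamiltonConnected (G.induce Y))
    (u v x y : X) (huv : u ≠ v) (hux : u ≠ x) (huy : u ≠ y)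
    (hvx : v ≠ x) (hvy : v ≠ y) (hxy : x ≠ y)
    (P : (G.induce X).Walk u v) (Q : (G.induce X).Walk x y)
    (hP : P.IsPath) (hQ : Q.IsPath)
    (hdis : ∀ z, z ∈ P.support → z ∉ Q.support)
    (hcov : ∀ z, z ∈ P.support ∨ z ∈ Q.support)
    (a b : X) (hab : s(a, b) ∈ P.edges)
    (a' b' : Y) (ha' : G.Adj a a') (hb' : G.Adj b b') (ha'b' : a' ≠ b') :
    ∃ (P' : G.Walk (u : V) (v : V)) (Q' : G.Walk (x : V) (y : V)),
      P'.IsPath ∧ Q'.IsPath ∧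
      (∀ z, z ∈ P'.support → z ∉ Q'.support) ∧
      (∀ z : V, z ∈ P'.support ∨ z ∈ Q'.support) := by
  rcases edge_split P hab with ⟨q, hadj, r, rfl⟩ | ⟨q, hadj, r, rfl⟩
  · exact helper G X Y hdisj hunion hHC ha' hb' ha'b' q hadj r Q hP hQ hdis hcov
  · exact helper G X Y hdisj hunion hHC hb' ha' ha'b'.symm q hadj r Q hP hQ hdis hcov
end

section
/- Let G be a graph partitioned into induced subgraphs X and Y, where Y is Hamilton-connected with at least 2 vertices. Let u ∈ V(Y) and v,x,y ∈ V(X) be distinct. Suppose there is a vertex a ∈ V(X) \ {v,x,y} with a neighbor b ∈ V(Y) \ {u}, and X admits vertex-disjoint a–v and x–y paths covering V(X). Then G admits vertex-disjoint u–v and x–y paths covering V(G). -/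
theorem path_extension_one_endpoint {V : Type*} [DecidableEq V] (G : SimpleGraph V)
    (X Y : Set V) (hdisj : Disjoint X Y) (hunion : X ∪ Y = Set.univ)
    (hY2 : Y.Nontrivial)
    (hHC : HamiltonConnected (G.induce Y))
    (u : Y) (v x y : X) (hvx : v ≠ x) (hvy : v ≠ y) (hxy : x ≠ y)
    (a : X) (hav : a ≠ v) (hax : a ≠ x) (hay : a ≠ y)
    (b : Y) (hbu : b ≠ u) (hab : G.Adj a b)
    (P : (G.induce X).Walk a v) (Q : (G.induce X).Walk x y)
    (hP : P.IsPath) (hQ : Q.IsPath)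
    (hdis : ∀ z, z ∈ P.support → z ∉ Q.support)
    (hcov : ∀ z, z ∈ P.support ∨ z ∈ Q.support) :
    ∃ (P' : G.Walk (u : V) (v : V)) (Q' : G.Walk (x : V) (y : V)),
      P'.IsPath ∧ Q'.IsPath ∧
      (∀ z, z ∈ P'.support → z ∉ Q'.support) ∧
      (∀ z : V, z ∈ P'.support ∨ z ∈ Q'.support) := by
  classical
  obtain ⟨R, hR⟩ := hHC u b (fun h => hbu h.symm)
  let fX : G.induce X →g G := (SimpleGraph.Embedding.induce X).toHom
  let fY : G.induce Y →g G := (SimpleGraph.Embedding.induce Y).toHom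
  have hba : G.Adj (b : V) (a : V) := hab.symm
  have hfX : ∀ {s t : X} (W : (G.induce X).Walk s t),
      (W.map fX).support = W.support.map Subtype.val := fun W => by
    exact SimpleGraph.Walk.support_map _ _
  have hfY : (R.map fY).support = R.support.map Subtype.val := by
    exact SimpleGraph.Walk.support_map _ _
  have hsupP' : ((R.map fY).append (SimpleGraph.Walk.cons hba (P.map fX))).support
      = R.support.map Subtype.val ++ P.support.map Subtype.val := by
    erw [SimpleGraph.Walk.support_append, SimpleGraph.Walk.support_cons, List.tail_cons,
      hfY, hfX]
  have hmemY : ∀ z ∈ R.support.map Subtype.val, z ∈ Y := by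
    intro z hz
    obtain ⟨w, _, rfl⟩ := List.mem_map.mp hz
    exact w.2
  have hmemXP : ∀ z ∈ P.support.map Subtype.val, z ∈ X := by
    intro z hz
    obtain ⟨w, _, rfl⟩ := List.mem_map.mp hz
    exact w.2
  have hmemXQ : ∀ z ∈ Q.support.map Subtype.val, z ∈ X := by
    intro z hz
    obtain ⟨w, _, rfl⟩ := List.mem_map.mp hz
    exact w.2
  refine ⟨(R.map fY).append (SimpleGraph.Walk.cons hba (P.map fX)),
    Q.map fX, ?_, ?_, ?_, ?_⟩
  · apply SimpleGraph.Walk.IsPath.mk'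
    erw [hsupP']
    refine List.Nodup.append ?_ ?_ ?_
    · exact hR.isPath.support_nodup.map Subtype.val_injective
    · exact hP.support_nodup.map Subtype.val_injective
    · intro z hz1 hz2
      exact Set.disjoint_right.mp hdisj (hmemY z hz1) (hmemXP z hz2)
  · exact SimpleGraph.Walk.map_isPath_of_injective Subtype.val_injective hQ
  · intro z hz1 hz2
    erw [hsupP'] at hz1
    erw [hfX] at hz2
    rcases List.mem_append.mp hz1 with h | h
    · exact Set.disjoint_right.mp hdisj (hmemY z h) (hmemXQ z hz2)
    · obtain ⟨w, hw, rfl⟩ := List.mem_map.mp h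
      obtain ⟨w', hw', hww'⟩ := List.mem_map.mp hz2
      rw [Subtype.val_injective hww'] at hw'
      exact hdis w hw hw'
  · intro z
    have hz : z ∈ X ∪ Y := hunion ▸ Set.mem_univ z
    rcases hz with h | h
    · rcases hcov ⟨z, h⟩ with hc | hc
      · left
        erw [hsupP']
        exact List.mem_append.mpr (Or.inr (List.mem_map.mpr ⟨⟨z, h⟩, hc, rfl⟩))
      · right
        erw [hfX]
        exact List.mem_map.mpr ⟨⟨z, h⟩, hc, rfl⟩
    · left
      erw [hsupP']
      exact List.mem_append.mpr (Or.inl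
        (List.mem_map.mpr ⟨⟨z, h⟩, hR.mem_support ⟨z, h⟩, rfl⟩))
end

section
/- The Johnson graph J(n,k) is Hamilton-connected for all n ≥ 1 and 0 ≤ k ≤ n. -/
namespace JohnsonHC

open Finset

variable {α : Type*} [DecidableEq α]

def Jadj (k : ℕ) (s t : Finset α) : Prop := s ≠ t ∧ (s ∩ t).card = k - 1

lemma Jadj.symm' {k : ℕ} {s t : Finset α} (h : Jadj k s t) : Jadj k t s :=
  ⟨h.1.symm, by rw [Finset.inter_comm]; exact h.2⟩

def HamL (U : Finset α) (k : ℕ) (A B : Finset α) (l : List (Finset α)) : Prop :=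
  l.Chain' (Jadj k) ∧ l.head? = some A ∧ l.getLast? = some B ∧ l.Nodup ∧
    ∀ s : Finset α, s ∈ l ↔ s ⊆ U ∧ s.card = k

lemma chain'_imp_mem {β : Type*} {R S : β → β → Prop} :
    ∀ {l : List β}, (∀ x ∈ l, ∀ y ∈ l, R x y → S x y) → l.Chain' R → l.Chain' S := by
  intro l
  induction l with
  | nil => intro _ _; exact List.isChain_nil
  | cons a t ih =>
    intro h hc
    cases t with
    | nil => exact List.isChain_singleton a
    | cons b t' =>
      rw [List.Chain', List.isChain_cons_cons] at hc ⊢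
      exact ⟨h a (by simp) b (by simp) hc.1,
        ih (fun x hx y hy => h x (by simp [hx]) y (by simp [hy])) hc.2⟩

lemma HamL.rev {U : Finset α} {k : ℕ} {A B : Finset α} {l : List (Finset α)}
    (h : HamL U k A B l) : HamL U k B A l.reverse := by
  obtain ⟨hc, hh, hl, hn, hm⟩ := h
  refine ⟨?_, ?_, ?_, List.nodup_reverse.mpr hn, fun s => by rw [List.mem_reverse]; exact hm s⟩
  · rw [List.Chain', List.isChain_reverse]
    exact hc.imp (fun a b hab => hab.symm')
  · rw [List.head?_reverse]; exact hl
  · rw [List.getLast?_reverse]; exact hh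

lemma cross_adj {k : ℕ} {a : α} {t s : Finset α} (has : a ∉ s) (hts : t ⊆ s)
    (ht : t.card = k - 1) : Jadj k (insert a t) s := by
  refine ⟨fun h => has (h ▸ Finset.mem_insert_self a t), ?_⟩
  rw [Finset.insert_inter_of_notMem has, Finset.inter_eq_left.mpr hts, ht]

lemma up_adj {k : ℕ} (hk : 2 ≤ k) {a : α} {x y : Finset α} (hx : a ∉ x) (hy : a ∉ y)
    (hxc : x.card = k - 1) (h : Jadj (k-1) x y) : Jadj k (insert a x) (insert a y) := by
  constructor
  · intro he
    apply h.1
    have := congrArg (·.erase a) he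
    simpa [Finset.erase_insert hx, Finset.erase_insert hy] using this
  · rw [← Finset.insert_inter_distrib,
      Finset.card_insert_of_notMem (fun hm => hx (Finset.mem_inter.mp hm).1), h.2]
    omega

lemma hamL_up {U : Finset α} {a : α} (haU : a ∈ U) {k : ℕ} (hk : 2 ≤ k)
    {t t' : Finset α} {M : List (Finset α)} (h : HamL (U.erase a) (k-1) t t' M) :
    (M.map (insert a)).Chain' (Jadj k) ∧
    (M.map (insert a)).head? = some (insert a t) ∧
    (M.map (insert a)).getLast? = some (insert a t') ∧
    (M.map (insert a)).Nodup ∧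
    (∀ s : Finset α, s ∈ M.map (insert a) ↔ s ⊆ U ∧ s.card = k ∧ a ∈ s) := by
  obtain ⟨hc, hh, hl, hn, hm⟩ := h
  have hmem : ∀ x ∈ M, x ⊆ U.erase a ∧ x.card = k - 1 := fun x hx => (hm x).mp hx
  have hnotin : ∀ x ∈ M, a ∉ x := fun x hx => (Finset.subset_erase.mp (hmem x hx).1).2
  refine ⟨?_, ?_, ?_, ?_, ?_⟩
  · rw [List.Chain', List.isChain_map]
    exact chain'_imp_mem
      (fun x hx y hy hxy => up_adj hk (hnotin x hx) (hnotin y hy) (hmem x hx).2 hxy) hc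
  · rw [List.head?_map, hh]; rfl
  · rw [List.getLast?_map, hl]; rfl
  · exact hn.map_on (fun x hx y hy hxy => by
      have := congrArg (·.erase a) hxy
      simpa [Finset.erase_insert (hnotin x hx), Finset.erase_insert (hnotin y hy)] using this)
  · intro s
    simp only [List.mem_map]
    constructor
    · rintro ⟨x, hx, rfl⟩
      obtain ⟨hxU, hxc⟩ := hmem x hx
      obtain ⟨hxU', hax⟩ := Finset.subset_erase.mp hxU
      refine ⟨Finset.insert_subset haU hxU', ?_, Finset.mem_insert_self a x⟩
      rw [Finset.card_insert_of_notMem hax]; omega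
    · rintro ⟨hsU, hsc, has⟩
      refine ⟨s.erase a, (hm _).mpr ⟨Finset.erase_subset_erase a hsU, ?_⟩, Finset.insert_erase has⟩
      rw [Finset.card_erase_of_mem has, hsc]

lemma hamL_of_complete {U : Finset α} {k : ℕ} {A B : Finset α}
    (hcomp : ∀ s t : Finset α, s ⊆ U → t ⊆ U → s.card = k → t.card = k → s ≠ t → Jadj k s t)
    (hA : A ⊆ U) (hB : B ⊆ U) (hAk : A.card = k) (hBk : B.card = k) (hAB : A ≠ B) :
    ∃ l, HamL U k A B l := by
  classical
  set mid := ((U.powersetCard k).erase A).erase B with hmid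
  have hApc : A ∈ U.powersetCard k := Finset.mem_powersetCard.mpr ⟨hA, hAk⟩
  have hBpc : B ∈ U.powersetCard k := Finset.mem_powersetCard.mpr ⟨hB, hBk⟩
  have hmidmem : ∀ s, s ∈ mid ↔ (s ≠ B ∧ s ≠ A ∧ s ∈ U.powersetCard k) := by
    intro s; rw [hmid]; simp [Finset.mem_erase, and_assoc]
  refine ⟨A :: (mid.toList ++ [B]), ?_, rfl, ?_, ?_, ?_⟩
  case refine_2 =>
    rw [show A :: (mid.toList ++ [B]) = (A :: mid.toList) ++ [B] by simp]
    exact List.getLast?_concat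
  case refine_3 =>
    refine List.nodup_cons.mpr ⟨?_, ?_⟩
    · intro h
      rcases List.mem_append.mp h with h | h
      · exact ((hmidmem A).mp (Finset.mem_toList.mp h)).2.1 rfl
      · exact hAB (List.mem_singleton.mp h)
    · refine List.nodup_append'.mpr ⟨Finset.nodup_toList _, List.nodup_singleton _, ?_⟩
      intro x hx hx'
      exact ((hmidmem x).mp (Finset.mem_toList.mp hx)).1 (List.mem_singleton.mp hx')
  case refine_4 =>
    intro s
    constructor
    · intro hs
      rcases List.mem_cons.mp hs with rfl | hs
      · exact ⟨hA, hAk⟩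
      rcases List.mem_append.mp hs with hs | hs
      · exact Finset.mem_powersetCard.mp ((hmidmem s).mp (Finset.mem_toList.mp hs)).2.2
      · rw [List.mem_singleton.mp hs]; exact ⟨hB, hBk⟩
    · intro h
      by_cases h1 : s = A
      · exact h1 ▸ List.mem_cons_self
      by_cases h2 : s = B
      · exact h2 ▸ List.mem_cons.mpr (Or.inr (List.mem_append.mpr (Or.inr (List.mem_singleton.mpr rfl))))
      · exact List.mem_cons.mpr (Or.inr (List.mem_append.mpr (Or.inl
          (Finset.mem_toList.mpr ((hmidmem s).mpr ⟨h2, h1, Finset.mem_powersetCard.mpr h⟩)))))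
  case refine_1 =>
    have hmem : ∀ s ∈ A :: (mid.toList ++ [B]), s ⊆ U ∧ s.card = k := by
      intro s hs
      rcases List.mem_cons.mp hs with rfl | hs
      · exact ⟨hA, hAk⟩
      rcases List.mem_append.mp hs with hs | hs
      · exact Finset.mem_powersetCard.mp ((hmidmem s).mp (Finset.mem_toList.mp hs)).2.2
      · rw [List.mem_singleton.mp hs]; exact ⟨hB, hBk⟩
    have hnd : (A :: (mid.toList ++ [B])).Nodup := by
      refine List.nodup_cons.mpr ⟨?_, ?_⟩
      · intro h
        rcases List.mem_append.mp h with h | h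
        · exact ((hmidmem A).mp (Finset.mem_toList.mp h)).2.1 rfl
        · exact hAB (List.mem_singleton.mp h)
      · refine List.nodup_append'.mpr ⟨Finset.nodup_toList _, List.nodup_singleton _, ?_⟩
        intro x hx hx'
        exact ((hmidmem x).mp (Finset.mem_toList.mp hx)).1 (List.mem_singleton.mp hx')
    refine List.Pairwise.isChain ?_
    refine hnd.imp_of_mem ?_
    intro x y hx hy hne
    exact hcomp x y (hmem x hx).1 (hmem y hy).1 (hmem x hx).2 (hmem y hy).2 hne


lemma exists_ne_same_card {U : Finset α} {m : ℕ} {A : Finset α} (hA : A ⊆ U) (hAc : A.card = m)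
    (hm : 1 ≤ m) (hmU : m < U.card) : ∃ t : Finset α, t ⊆ U ∧ t.card = m ∧ t ≠ A := by
  obtain ⟨x, hx⟩ := Finset.card_pos.mp (by omega : 0 < A.card)
  have h0 : 0 < (U \ A).card := by rw [Finset.card_sdiff_of_subset hA]; omega
  obtain ⟨y, hy⟩ := Finset.card_pos.mp h0
  obtain ⟨hyU, hyA⟩ := Finset.mem_sdiff.mp hy
  refine ⟨insert y (A.erase x), ?_, ?_, ?_⟩
  · exact Finset.insert_subset hyU ((Finset.erase_subset x A).trans hA)
  · rw [Finset.card_insert_of_notMem (fun h => hyA (Finset.mem_of_mem_erase h)),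
      Finset.card_erase_of_mem hx]
    omega
  · intro h; exact hyA (h ▸ Finset.mem_insert_self y _)

lemma exists_superset_ne {U : Finset α} {k : ℕ} {t : Finset α} (ht : t ⊆ U) (htc : t.card = k - 1)
    (hk : 1 ≤ k) (hU : k + 1 ≤ U.card) (F : Finset α) :
    ∃ s : Finset α, t ⊆ s ∧ s ⊆ U ∧ s.card = k ∧ s ≠ F := by
  have h2 : 1 < (U \ t).card := by rw [Finset.card_sdiff_of_subset ht]; omega
  obtain ⟨x, hx, y, hy, hxy⟩ := Finset.one_lt_card.mp h2
  obtain ⟨hxU, hxt⟩ := Finset.mem_sdiff.mp hx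
  obtain ⟨hyU, hyt⟩ := Finset.mem_sdiff.mp hy
  by_cases hxF : insert x t = F
  · refine ⟨insert y t, Finset.subset_insert y t, Finset.insert_subset hyU ht, ?_, ?_⟩
    · rw [Finset.card_insert_of_notMem hyt]; omega
    · rw [← hxF]
      intro h
      have hmem : y ∈ insert x t := h ▸ Finset.mem_insert_self y t
      rcases Finset.mem_insert.mp hmem with h' | h'
      · exact hxy h'.symm
      · exact hyt h'
  · exact ⟨insert x t, Finset.subset_insert x t, Finset.insert_subset hxU ht,
      by rw [Finset.card_insert_of_notMem hxt]; omega, hxF⟩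

lemma exists_sub_ne {Y : Finset α} {k : ℕ} (hY : Y.card = k) (hk : 2 ≤ k) (F : Finset α) :
    ∃ t : Finset α, t ⊆ Y ∧ t.card = k - 1 ∧ t ≠ F := by
  obtain ⟨z, hz, w, hw, hzw⟩ := Finset.one_lt_card.mp (by omega : 1 < Y.card)
  by_cases h : Y.erase z = F
  · refine ⟨Y.erase w, Finset.erase_subset w Y, by rw [Finset.card_erase_of_mem hw, hY], ?_⟩
    rw [← h]
    intro he
    have hmem : z ∈ Y.erase w := Finset.mem_erase.mpr ⟨hzw, hz⟩
    rw [he] at hmem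
    exact (Finset.mem_erase.mp hmem).1 rfl
  · exact ⟨Y.erase z, Finset.erase_subset z Y, by rw [Finset.card_erase_of_mem hz, hY], h⟩

def IHtype (U' : Finset α) : Prop := ∀ (k' : ℕ) (A B : Finset α), A ⊆ U' → B ⊆ U' →
    A.card = k' → B.card = k' → A ≠ B → ∃ l, HamL U' k' A B l


lemma lower_iff {U : Finset α} {a : α} (haU : a ∈ U) {k : ℕ} (s : Finset α) :
    (s ⊆ U ∧ s.card = k) ↔ ((s ⊆ U ∧ s.card = k ∧ a ∈ s) ∨ (s ⊆ U.erase a ∧ s.card = k)) := by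
  by_cases h : a ∈ s
  · simp only [Finset.subset_erase, h]
    tauto
  · simp only [Finset.subset_erase, h]
    tauto

lemma case_mixed {U : Finset α} {a : α} {k : ℕ} (haU : a ∈ U) (hk2 : 2 ≤ k)
    (hkU : k + 2 ≤ U.card) (ih : IHtype (U.erase a))
    {A B : Finset α} (hAU : A ⊆ U) (hBU : B ⊆ U) (hAk : A.card = k) (hBk : B.card = k)
    (haA : a ∈ A) (haB : a ∉ B) : ∃ l, HamL U k A B l := by
  have hU'c : (U.erase a).card = U.card - 1 := Finset.card_erase_of_mem haU
  have hA'U : A.erase a ⊆ U.erase a := Finset.erase_subset_erase a hAU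
  have hA'c : (A.erase a).card = k - 1 := by rw [Finset.card_erase_of_mem haA, hAk]
  obtain ⟨t, htU, htc, htA⟩ := exists_ne_same_card hA'U hA'c (by omega) (by omega)
  obtain ⟨M, hM⟩ := ih (k-1) (A.erase a) t hA'U htU hA'c htc (Ne.symm htA)
  have hBU' : B ⊆ U.erase a := Finset.subset_erase.mpr ⟨hBU, haB⟩
  obtain ⟨s, hts, hsU, hsc, hsB⟩ := exists_superset_ne htU htc (by omega) (by omega) B
  obtain ⟨N, hN⟩ := ih k s B hsU hBU' hsc hBk hsB
  obtain ⟨hMc, hMh, hMl, hMn, hMm⟩ := hamL_up haU hk2 hM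
  obtain ⟨hNc, hNh, hNl, hNn, hNm⟩ := hN
  rw [Finset.insert_erase haA] at hMh
  have haN : ∀ x ∈ N, a ∉ x := fun x hx => (Finset.subset_erase.mp ((hNm x).mp hx).1).2
  have has : a ∉ s := (Finset.subset_erase.mp hsU).2
  refine ⟨M.map (insert a) ++ N, ?_, ?_, ?_, ?_, ?_⟩
  · refine hMc.append hNc ?_
    intro x hx y hy
    rw [hMl, Option.mem_def, Option.some_inj] at hx
    rw [hNh, Option.mem_def, Option.some_inj] at hy
    subst hx; subst hy
    exact cross_adj has hts htc
  · rw [List.head?_append, hMh, Option.some_or]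
  · rw [List.getLast?_append, hNl, Option.some_or]
  · refine List.nodup_append'.mpr ⟨hMn, hNn, ?_⟩
    intro x hx hx'
    exact haN x hx' ((hMm x).mp hx).2.2
  · intro s₀
    rw [List.mem_append, hMm, hNm, lower_iff haU s₀]

lemma case_low {U : Finset α} {a : α} {k : ℕ} (haU : a ∈ U) (hk2 : 2 ≤ k)
    (hkU : k + 2 ≤ U.card) (ih : IHtype (U.erase a))
    {A B : Finset α} (hAU : A ⊆ U) (hBU : B ⊆ U) (hAk : A.card = k) (hBk : B.card = k)
    (haA : a ∉ A) (haB : a ∉ B) (hAB : A ≠ B) : ∃ l, HamL U k A B l := by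
  have hU'c : (U.erase a).card = U.card - 1 := Finset.card_erase_of_mem haU
  obtain ⟨L, hL⟩ := ih k A B (Finset.subset_erase.mpr ⟨hAU, haA⟩)
    (Finset.subset_erase.mpr ⟨hBU, haB⟩) hAk hBk hAB
  obtain ⟨hLc, hLh, hLl, hLn, hLm⟩ := hL
  obtain _ | ⟨c, L₂⟩ := L
  · simp at hLh
  obtain rfl : A = c := by symm; simpa using hLh
  obtain _ | ⟨Y, L₃⟩ := L₂
  · simp at hLl; exact absurd hLl hAB
  have hYm : Y ⊆ U.erase a ∧ Y.card = k := (hLm Y).mp (by simp)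
  obtain ⟨x, hx⟩ := Finset.card_pos.mp (by omega : 0 < A.card)
  have htA : A.erase x ⊆ A := Finset.erase_subset x A
  have htc : (A.erase x).card = k - 1 := by rw [Finset.card_erase_of_mem hx, hAk]
  obtain ⟨t', ht'Y, ht'c, ht't⟩ := exists_sub_ne hYm.2 hk2 (A.erase x)
  have htU : A.erase x ⊆ U.erase a := htA.trans (Finset.subset_erase.mpr ⟨hAU, haA⟩)
  have ht'U : t' ⊆ U.erase a := ht'Y.trans hYm.1
  obtain ⟨M, hM⟩ := ih (k-1) (A.erase x) t' htU ht'U htc ht'c (Ne.symm ht't)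
  obtain ⟨hMc, hMh, hMl, hMn, hMm⟩ := hamL_up haU hk2 hM
  have haY : a ∉ Y := (Finset.subset_erase.mp hYm.1).2
  have hAM : A ∉ M.map (insert a) := fun h => haA ((hMm A).mp h).2.2
  refine ⟨([A] ++ M.map (insert a)) ++ (Y :: L₃), ?_, ?_, ?_, ?_, ?_⟩
  · refine List.IsChain.append ?_ hLc.tail ?_
    · refine List.IsChain.append (List.isChain_singleton A) hMc ?_
      intro x₀ hx₀ y₀ hy₀
      simp only [List.getLast?_singleton, Option.mem_def, Option.some_inj] at hx₀
      rw [hMh, Option.mem_def, Option.some_inj] at hy₀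
      subst hx₀; subst hy₀
      exact (cross_adj haA htA htc).symm'
    · intro x₀ hx₀ y₀ hy₀
      rw [List.getLast?_append, hMl, Option.some_or, Option.mem_def, Option.some_inj] at hx₀
      simp only [List.head?_cons, Option.mem_def, Option.some_inj] at hy₀
      subst hx₀; subst hy₀
      exact cross_adj haY ht'Y ht'c
  · rfl
  · rw [List.getLast?_append]
    have hYB : (Y :: L₃).getLast? = some B := by rwa [List.getLast?_cons_cons] at hLl
    rw [hYB, Option.some_or]
  · refine List.nodup_append'.mpr ⟨?_, (List.nodup_cons.mp hLn).2, ?_⟩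
    · refine List.nodup_append'.mpr ⟨List.nodup_singleton _, hMn, ?_⟩
      intro x₀ hx₀ hx₀'
      simp only [List.mem_singleton] at hx₀
      exact hAM (hx₀ ▸ hx₀')
    · intro x₀ hx₀ hx₀'
      rcases List.mem_append.mp hx₀ with hx₀ | hx₀
      · simp only [List.mem_singleton] at hx₀
        exact (List.nodup_cons.mp hLn).1 (hx₀ ▸ hx₀')
      · have h1 : a ∈ x₀ := ((hMm x₀).mp hx₀).2.2
        have h2 : x₀ ⊆ U.erase a := ((hLm x₀).mp (List.mem_cons_of_mem A hx₀')).1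
        exact (Finset.subset_erase.mp h2).2 h1
  · intro s₀
    have hsp : s₀ ∈ ([A] ++ M.map (insert a)) ++ (Y :: L₃) ↔
        s₀ = A ∨ (s₀ ∈ M.map (insert a) ∨ s₀ ∈ Y :: L₃) := by
      simp only [List.mem_append, List.mem_singleton, or_assoc]
    rw [hsp, hMm, lower_iff haU s₀]
    have hLms := hLm s₀
    rw [List.mem_cons] at hLms
    constructor
    · rintro (h | h | h)
      · exact Or.inr (hLms.mp (Or.inl h))
      · exact Or.inl h
      · exact Or.inr (hLms.mp (Or.inr h))
    · rintro (h | h)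
      · exact Or.inr (Or.inl h)
      · rcases hLms.mpr h with h' | h'
        · exact Or.inl h'
        · exact Or.inr (Or.inr h')

lemma case_high {U : Finset α} {a : α} {k : ℕ} (haU : a ∈ U) (hk2 : 2 ≤ k)
    (hkU : k + 2 ≤ U.card) (ih : IHtype (U.erase a))
    {A B : Finset α} (hAU : A ⊆ U) (hBU : B ⊆ U) (hAk : A.card = k) (hBk : B.card = k)
    (haA : a ∈ A) (haB : a ∈ B) (hAB : A ≠ B) : ∃ l, HamL U k A B l := by
  have hU'c : (U.erase a).card = U.card - 1 := Finset.card_erase_of_mem haU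
  have hA'U : A.erase a ⊆ U.erase a := Finset.erase_subset_erase a hAU
  have hB'U : B.erase a ⊆ U.erase a := Finset.erase_subset_erase a hBU
  have hA'c : (A.erase a).card = k - 1 := by rw [Finset.card_erase_of_mem haA, hAk]
  have hB'c : (B.erase a).card = k - 1 := by rw [Finset.card_erase_of_mem haB, hBk]
  have hA'B' : A.erase a ≠ B.erase a := fun h => hAB (by
    rw [← Finset.insert_erase haA, ← Finset.insert_erase haB, h])
  obtain ⟨M, hM⟩ := ih (k-1) (A.erase a) (B.erase a) hA'U hB'U hA'c hB'c hA'B'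
  obtain ⟨hMc, hMh, hMl, hMn, hMm⟩ := hamL_up haU hk2 hM
  rw [Finset.insert_erase haA] at hMh
  rw [Finset.insert_erase haB] at hMl
  obtain ⟨M', hGen⟩ : ∃ M', M.map (insert a) = M' := ⟨_, rfl⟩
  rw [hGen] at hMc hMh hMl hMn hMm
  obtain _ | ⟨c, M₂⟩ := M'
  · simp at hMh
  obtain rfl : A = c := by symm; simpa using hMh
  obtain _ | ⟨W, M₃⟩ := M₂
  · simp at hMl; exact absurd hMl hAB
  have hWm : W ⊆ U ∧ W.card = k ∧ a ∈ W := (hMm W).mp (by simp)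
  have haW : a ∈ W := hWm.2.2
  have ht₂U : W.erase a ⊆ U.erase a := Finset.erase_subset_erase a hWm.1
  have ht₂c : (W.erase a).card = k - 1 := by rw [Finset.card_erase_of_mem haW, hWm.2.1]
  obtain ⟨s, hA's, hsU, hsc, _⟩ := exists_superset_ne hA'U hA'c (by omega) (by omega) ∅
  obtain ⟨s', ht₂s', hs'U, hs'c, hs's⟩ := exists_superset_ne ht₂U ht₂c (by omega) (by omega) s
  obtain ⟨N, hN⟩ := ih k s s' hsU hs'U hsc hs'c (Ne.symm hs's)
  obtain ⟨hNc, hNh, hNl, hNn, hNm⟩ := hN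
  have has : a ∉ s := (Finset.subset_erase.mp hsU).2
  have has' : a ∉ s' := (Finset.subset_erase.mp hs'U).2
  have e1 : Jadj k A s := by
    have := cross_adj has hA's hA'c
    rwa [Finset.insert_erase haA] at this
  have e2 : Jadj k s' W := by
    have := (cross_adj has' ht₂s' ht₂c).symm'
    rwa [Finset.insert_erase haW] at this
  refine ⟨([A] ++ N) ++ (W :: M₃), ?_, ?_, ?_, ?_, ?_⟩
  · refine List.IsChain.append ?_ hMc.tail ?_
    · refine List.IsChain.append (List.isChain_singleton A) hNc ?_
      intro x₀ hx₀ y₀ hy₀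
      simp only [List.getLast?_singleton, Option.mem_def, Option.some_inj] at hx₀
      rw [hNh, Option.mem_def, Option.some_inj] at hy₀
      subst hx₀; subst hy₀
      exact e1
    · intro x₀ hx₀ y₀ hy₀
      rw [List.getLast?_append, hNl, Option.some_or, Option.mem_def, Option.some_inj] at hx₀
      simp only [List.head?_cons, Option.mem_def, Option.some_inj] at hy₀
      subst hx₀; subst hy₀
      exact e2
  · rfl
  · rw [List.getLast?_append]
    have hWB : (W :: M₃).getLast? = some B := by rwa [List.getLast?_cons_cons] at hMl
    rw [hWB, Option.some_or]
  · have hAN : A ∉ N := fun h => (Finset.subset_erase.mp ((hNm A).mp h).1).2 haA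
    refine List.nodup_append'.mpr ⟨?_, (List.nodup_cons.mp hMn).2, ?_⟩
    · refine List.nodup_append'.mpr ⟨List.nodup_singleton _, hNn, ?_⟩
      intro x₀ hx₀ hx₀'
      simp only [List.mem_singleton] at hx₀
      exact hAN (hx₀ ▸ hx₀')
    · intro x₀ hx₀ hx₀'
      rcases List.mem_append.mp hx₀ with hx₀ | hx₀
      · simp only [List.mem_singleton] at hx₀
        exact (List.nodup_cons.mp hMn).1 (hx₀ ▸ hx₀')
      · have h1 : a ∉ x₀ := (Finset.subset_erase.mp ((hNm x₀).mp hx₀).1).2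
        exact h1 (((hMm x₀).mp (List.mem_cons_of_mem A hx₀')).2.2)
  · intro s₀
    have hsp : s₀ ∈ ([A] ++ N) ++ (W :: M₃) ↔
        s₀ = A ∨ (s₀ ∈ N ∨ s₀ ∈ W :: M₃) := by
      simp only [List.mem_append, List.mem_singleton, or_assoc]
    rw [hsp, hNm, lower_iff haU s₀]
    have hMms := hMm s₀
    rw [List.mem_cons] at hMms
    constructor
    · rintro (h | h | h)
      · exact Or.inl (hMms.mp (Or.inl h))
      · exact Or.inr h
      · exact Or.inl (hMms.mp (Or.inr h))
    · rintro (h | h)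
      · rcases hMms.mpr h with h' | h'
        · exact Or.inl h'
        · exact Or.inr (Or.inr h')
      · exact Or.inr (Or.inl h)

lemma key (U : Finset α) : ∀ (k : ℕ) (A B : Finset α), A ⊆ U → B ⊆ U →
    A.card = k → B.card = k → A ≠ B → ∃ l, HamL U k A B l := by
  induction U using Finset.strongInduction with
  | _ U IH =>
  intro k A B hAU hBU hAk hBk hAB
  have hk1 : 1 ≤ k := by
    rcases Nat.eq_zero_or_pos k with h | h
    · exact absurd ((Finset.card_eq_zero.mp (hAk.trans h)).trans
        (Finset.card_eq_zero.mp (hBk.trans h)).symm) hAB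
    · exact h
  have hkle : k ≤ U.card := hAk ▸ Finset.card_le_card hAU
  have hkU : k < U.card := by
    rcases lt_or_eq_of_le hkle with h | h
    · exact h
    · exact absurd ((Finset.eq_of_subset_of_card_le hAU (by omega)).trans
        (Finset.eq_of_subset_of_card_le hBU (by omega)).symm) hAB
  have hlt : ∀ s t : Finset α, s.card = k → t.card = k → s ≠ t → (s ∩ t).card < k := by
    intro s t hs ht hst
    have hle : (s ∩ t).card ≤ k := hs ▸ Finset.card_le_card Finset.inter_subset_left
    rcases lt_or_eq_of_le hle with h | h
    · exact h
    · exfalso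
      have h1 : s ∩ t = s := Finset.eq_of_subset_of_card_le Finset.inter_subset_left (by omega)
      have h2 : s ⊆ t := Finset.inter_eq_left.mp h1
      exact hst (Finset.eq_of_subset_of_card_le h2 (by omega))
  by_cases hsmall : k = 1 ∨ k + 1 = U.card
  · refine hamL_of_complete ?_ hAU hBU hAk hBk hAB
    intro s t hsU htU hs ht hst
    refine ⟨hst, ?_⟩
    have h1 := hlt s t hs ht hst
    rcases hsmall with h | h
    · omega
    · have h2 := Finset.card_union_add_card_inter s t
      have h3 : (s ∪ t).card ≤ U.card := Finset.card_le_card (Finset.union_subset hsU htU)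
      omega
  · push_neg at hsmall
    have hk2 : 2 ≤ k := by omega
    have hkU2 : k + 2 ≤ U.card := by omega
    obtain ⟨a, haU⟩ := Finset.card_pos.mp (by omega : 0 < U.card)
    have ih : IHtype (U.erase a) := fun k' A' B' h1 h2 h3 h4 h5 =>
      IH (U.erase a) (Finset.erase_ssubset haU) k' A' B' h1 h2 h3 h4 h5
    by_cases haA : a ∈ A <;> by_cases haB : a ∈ B
    · exact case_high haU hk2 hkU2 ih hAU hBU hAk hBk haA haB hAB
    · exact case_mixed haU hk2 hkU2 ih hAU hBU hAk hBk haA haB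
    · obtain ⟨l, hl⟩ := case_mixed haU hk2 hkU2 ih hBU hAU hBk hAk haB haA
      exact ⟨l.reverse, hl.rev⟩
    · exact case_low haU hk2 hkU2 ih hAU hBU hAk hBk haA haB hAB

lemma walk_of_chain {V : Type*} (G : SimpleGraph V) :
    ∀ (l : List V) (u v : V), l.Chain' G.Adj → l.head? = some u → l.getLast? = some v →
      ∃ p : G.Walk u v, p.support = l := by
  intro l
  induction l with
  | nil => intro u v _ h _; simp at h
  | cons a t ih =>
    intro u v hc hh hl
    obtain rfl : u = a := by symm; simpa using hh
    cases t with
    | nil =>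
      obtain rfl : u = v := by simpa using hl
      exact ⟨SimpleGraph.Walk.nil, rfl⟩
    | cons b t' =>
      have hadj : G.Adj u b := (List.isChain_cons_cons.mp hc).1
      obtain ⟨p, hp⟩ := ih b v (List.isChain_cons_cons.mp hc).2 rfl
        (by rwa [List.getLast?_cons_cons] at hl)
      exact ⟨SimpleGraph.Walk.cons hadj p, by simp [SimpleGraph.Walk.support_cons, hp]⟩

end JohnsonHC


theorem johnson_hamiltonConnected (n k : ℕ) (hn : 1 ≤ n) (hk : k ≤ n) :
    HamiltonConnected (JohnsonGraph n k) := by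
  intro u v huv
  have hne : u.1 ≠ v.1 := fun h => huv (Subtype.ext h)
  obtain ⟨l, hc, hh, hl, hnd, hm⟩ := JohnsonHC.key (Finset.univ : Finset (Fin n)) k u.1 v.1
    (Finset.subset_univ _) (Finset.subset_univ _) u.2 v.2 hne
  have hcard : ∀ s ∈ l, s.card = k := fun s hs => ((hm s).mp hs).2
  set L : List {s : Finset (Fin n) // s.card = k} := l.pmap (fun s h => ⟨s, h⟩) hcard with hLdef
  have hmap : L.map Subtype.val = l := by
    rw [hLdef, List.map_pmap]
    exact (List.pmap_eq_map _).trans (List.map_id l)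
  have hchain : L.Chain' (JohnsonGraph n k).Adj := by
    have hcl := hc
    rw [← hmap, List.Chain', List.isChain_map] at hcl
    refine JohnsonHC.chain'_imp_mem ?_ hcl
    intro x _ y _ hxy
    exact ⟨fun h => hxy.1 (congrArg Subtype.val h), hxy.2⟩
  have hhead : L.head? = some u := by
    have h1 : (L.head?).map Subtype.val = some u.1 := by rw [← List.head?_map, hmap, hh]
    obtain ⟨w, hw1, hw2⟩ := Option.map_eq_some_iff.mp h1
    rw [hw1, Subtype.ext hw2]
  have hlast : L.getLast? = some v := by
    have h1 : (L.getLast?).map Subtype.val = some v.1 := by rw [← List.getLast?_map, hmap, hl]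
    obtain ⟨w, hw1, hw2⟩ := Option.map_eq_some_iff.mp h1
    rw [hw1, Subtype.ext hw2]
  have hLnd : L.Nodup := List.Nodup.of_map Subtype.val (hmap ▸ hnd)
  obtain ⟨p, hp⟩ := JohnsonHC.walk_of_chain (JohnsonGraph n k) L u v hchain hhead hlast
  refine ⟨p, ?_⟩
  intro x
  rw [hp]
  refine @List.count_eq_one_of_mem _ instBEqOfDecidableEq _ _ _ hLnd ?_
  have hx : x.1 ∈ l := (hm x.1).mpr ⟨Finset.subset_univ _, x.2⟩
  rw [← hmap] at hx
  obtain ⟨w, hw, hwx⟩ := List.mem_map.mp hx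
  exact Subtype.ext hwx ▸ hw
end
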